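/- For n ≥ 2, every injective endomorphism of the semigroup I_ω^n(conv) equals the shift endomorphism e_{i₀} for some i₀ ∈ ω. -/
import Mathlib


/-- A nonzero element of `I_ω^n(conv)`: the partial order isomorphism with domain
`{i, …, i+k-1}` and range `{j, …, j+k-1}` (mapping `t ↦ t - i + j`), where `1 ≤ k ≤ n`. -/
structure ConvEl (n : ℕ) where
  i : ℕ
  j : ℕ
  k : ℕ
  k_pos : 1 ≤ k
  k_le : k ≤ n

/-- The inverse semigroup `I_ω^n(conv)` of partial order isomorphisms between order-convex
subsets of `(ω, ≤)` of cardinality at most `n`; `none` is the zero (the empty map). -/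
abbrev ConvSgp (n : ℕ) := Option (ConvEl n)

/-- Composition of partial maps (`x` applied first, then `y`) in `I_ω^n(conv)`. -/
def cmul {n : ℕ} : ConvSgp n → ConvSgp n → ConvSgp n
  | some x, some y =>
    if h : max x.j y.i < min (x.j + x.k) (y.i + y.k) then
      some { i := max x.j y.i - x.j + x.i
             j := max x.j y.i - y.i + y.j
             k := min (x.j + x.k) (y.i + y.k) - max x.j y.i
             k_pos := by omega
             k_le := by have hx := x.k_le; omega }
    else none
  | _, _ => none

/-- The shift endomorphism `e_{i₀}` of `I_ω^n(conv)`. -/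
def cshift {n : ℕ} (i0 : ℕ) : ConvSgp n → ConvSgp n
  | none => none
  | some x => some ⟨x.i + i0, x.j + i0, x.k, x.k_pos, x.k_le⟩

-- helpers
variable {n : ℕ}

def oI : ConvSgp n → ℕ
  | none => 0
  | some x => x.i

def oJ : ConvSgp n → ℕ
  | none => 0
  | some x => x.j

def oK : ConvSgp n → ℕ
  | none => 0
  | some x => x.k

def mkC (n i j k : ℕ) : ConvSgp n :=
  if h : 1 ≤ k ∧ k ≤ n then some ⟨i, j, k, h.1, h.2⟩ else none

lemma mkC_eq (i j k : ℕ) (h1 : 1 ≤ k) (h2 : k ≤ n) :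
    mkC n i j k = some ⟨i, j, k, h1, h2⟩ := dif_pos ⟨h1, h2⟩

lemma oI_mk (i j k : ℕ) (h1 : 1 ≤ k) (h2 : k ≤ n) : oI (mkC n i j k) = i := by
  rw [mkC_eq i j k h1 h2]; rfl

lemma oJ_mk (i j k : ℕ) (h1 : 1 ≤ k) (h2 : k ≤ n) : oJ (mkC n i j k) = j := by
  rw [mkC_eq i j k h1 h2]; rfl

lemma oK_mk (i j k : ℕ) (h1 : 1 ≤ k) (h2 : k ≤ n) : oK (mkC n i j k) = k := by
  rw [mkC_eq i j k h1 h2]; rfl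

lemma oK_le (x : ConvSgp n) : oK x ≤ n := by
  cases x with
  | none => exact Nat.zero_le n
  | some x => exact x.k_le

lemma oK_pos {x : ConvSgp n} (h : x ≠ none) : 1 ≤ oK x := by
  cases x with
  | none => exact absurd rfl h
  | some x => exact x.k_pos

lemma ne_none {x : ConvSgp n} (h : 1 ≤ oK x) : x ≠ none := by
  cases x with
  | none => simp [oK] at h
  | some x => simp

lemma mk_ne (i j k : ℕ) (h1 : 1 ≤ k) (h2 : k ≤ n) : mkC n i j k ≠ none := by
  rw [mkC_eq i j k h1 h2]; simp

lemma ext' {x y : ConvSgp n} (h1 : oI x = oI y) (h2 : oJ x = oJ y) (h3 : oK x = oK y) :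
    x = y := by
  cases x with
  | none =>
    cases y with
    | none => rfl
    | some y => have := y.k_pos; simp [oK] at h3; omega
  | some x =>
    cases y with
    | none => have := x.k_pos; simp [oK] at h3; omega
    | some y =>
      obtain ⟨i, j, k, p, q⟩ := x
      obtain ⟨i', j', k', p', q'⟩ := y
      simp only [oI, oJ, oK] at h1 h2 h3
      subst h1; subst h2; subst h3; rfl

lemma cmul_none_right (x : ConvSgp n) : cmul x none = none := by cases x <;> rfl

lemma cmul_none_left (y : ConvSgp n) : cmul none y = none := by cases y <;> rfl

lemma cmul_ne {x y : ConvSgp n} (h : cmul x y ≠ none) :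
    1 ≤ oK x ∧ 1 ≤ oK y ∧ max (oJ x) (oI y) < min (oJ x + oK x) (oI y + oK y) := by
  cases x with
  | none => exact absurd (cmul_none_left y) h
  | some x =>
    cases y with
    | none => exact absurd (cmul_none_right _) h
    | some y =>
      by_cases hc : max x.j y.i < min (x.j + x.k) (y.i + y.k)
      · exact ⟨x.k_pos, y.k_pos, hc⟩
      · exact absurd (by simp only [cmul, dif_neg hc]) h

lemma oI_cmul {x y : ConvSgp n} (hx : 1 ≤ oK x) (hy : 1 ≤ oK y)
    (hov : max (oJ x) (oI y) < min (oJ x + oK x) (oI y + oK y)) :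
    oI (cmul x y) = max (oJ x) (oI y) - oJ x + oI x := by
  cases x with
  | none => simp [oK] at hx
  | some x =>
    cases y with
    | none => simp [oK] at hy
    | some y =>
      have hc : max x.j y.i < min (x.j + x.k) (y.i + y.k) := hov
      simp only [cmul, dif_pos hc]
      rfl

lemma oJ_cmul {x y : ConvSgp n} (hx : 1 ≤ oK x) (hy : 1 ≤ oK y)
    (hov : max (oJ x) (oI y) < min (oJ x + oK x) (oI y + oK y)) :
    oJ (cmul x y) = max (oJ x) (oI y) - oI y + oJ y := by
  cases x with
  | none => simp [oK] at hx
  | some x =>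
    cases y with
    | none => simp [oK] at hy
    | some y =>
      have hc : max x.j y.i < min (x.j + x.k) (y.i + y.k) := hov
      simp only [cmul, dif_pos hc]
      rfl

lemma oK_cmul {x y : ConvSgp n} (hx : 1 ≤ oK x) (hy : 1 ≤ oK y)
    (hov : max (oJ x) (oI y) < min (oJ x + oK x) (oI y + oK y)) :
    oK (cmul x y) = min (oJ x + oK x) (oI y + oK y) - max (oJ x) (oI y) := by
  cases x with
  | none => simp [oK] at hx
  | some x =>
    cases y with
    | none => simp [oK] at hy
    | some y =>
      have hc : max x.j y.i < min (x.j + x.k) (y.i + y.k) := hov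
      simp only [cmul, dif_pos hc]
      rfl

lemma cmul_mk {i1 j1 k1 i2 j2 k2 : ℕ} (h1 : 1 ≤ k1) (h1' : k1 ≤ n) (h2 : 1 ≤ k2) (h2' : k2 ≤ n)
    (hov : max j1 i2 < min (j1 + k1) (i2 + k2)) (i3 j3 k3 : ℕ)
    (e1 : max j1 i2 - j1 + i1 = i3) (e2 : max j1 i2 - i2 + j2 = j3)
    (e3 : min (j1 + k1) (i2 + k2) - max j1 i2 = k3) :
    cmul (mkC n i1 j1 k1) (mkC n i2 j2 k2) = mkC n i3 j3 k3 := by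
  have hk3 : 1 ≤ k3 ∧ k3 ≤ n := by omega
  rw [mkC_eq i1 j1 k1 h1 h1', mkC_eq i2 j2 k2 h2 h2', mkC_eq i3 j3 k3 hk3.1 hk3.2]
  subst e1; subst e2; subst e3
  simp only [cmul, dif_pos hov]

lemma idem_eq {u : ConvSgp n} (hu : u ≠ none) (h : cmul u u = u) : oI u = oJ u := by
  have h1 : cmul u u ≠ none := by rw [h]; exact hu
  obtain ⟨hk, _, hov⟩ := cmul_ne h1
  have e1 := oI_cmul hk hk hov
  have e2 := oJ_cmul hk hk hov
  rw [h] at e1 e2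
  omega

/-- For `n ≥ 2`, every injective endomorphism of `I_ω^n(conv)` equals the shift
endomorphism `e_{i₀}` for some `i₀ ∈ ω`. -/
theorem convSgp_injective_endomorphism_is_shift (n : ℕ) (hn : 2 ≤ n)
    (f : ConvSgp n → ConvSgp n) (hinj : Function.Injective f)
    (hf : ∀ x y : ConvSgp n, f (cmul x y) = cmul (f x) (f y)) :
    ∃ i0 : ℕ, f = cshift i0 := by
  have hn1 : 1 ≤ n := by omega
  -- Step 1: f none = none
  have f0 : f none = none := by
    by_contra h0
    have key : ∀ t : ℕ, oI (f (mkC n t t 1)) = oJ (f (mkC n t t 1)) ∧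
        oJ (f (mkC n t t 1)) ≤ oI (f none) ∧ 1 ≤ oK (f (mkC n t t 1)) := by
      intro t
      have habs : cmul (f (mkC n t t 1)) (f none) = f none := by
        rw [← hf, cmul_none_right]
      have h1 : cmul (f (mkC n t t 1)) (f none) ≠ none := by rw [habs]; exact h0
      obtain ⟨hv1, hu1, hov⟩ := cmul_ne h1
      have e1 := oI_cmul hv1 hu1 hov
      have e2 := oJ_cmul hv1 hu1 hov
      rw [habs] at e1 e2
      exact ⟨by omega, by omega, hv1⟩
    have hmaps : ∀ a ∈ Finset.range ((oI (f none) + 1) * (n + 1) + 1),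
        (fun t => (oJ (f (mkC n t t 1)), oK (f (mkC n t t 1)))) a ∈
          Finset.range (oI (f none) + 1) ×ˢ Finset.range (n + 1) := by
      intro a _
      simp only [Finset.mem_product, Finset.mem_range]
      obtain ⟨_, h2, _⟩ := key a
      have := oK_le (f (mkC n a a 1))
      exact ⟨by omega, by omega⟩
    have hcard : (Finset.range (oI (f none) + 1) ×ˢ Finset.range (n + 1)).card <
        (Finset.range ((oI (f none) + 1) * (n + 1) + 1)).card := by
      simp [Finset.card_product]
    obtain ⟨t1, ht1, t2, ht2, hne', heq⟩ :=
      Finset.exists_ne_map_eq_of_card_lt_of_maps_to hcard hmaps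
    apply hne'
    have hj : oJ (f (mkC n t1 t1 1)) = oJ (f (mkC n t2 t2 1)) := congrArg Prod.fst heq
    have hk : oK (f (mkC n t1 t1 1)) = oK (f (mkC n t2 t2 1)) := congrArg Prod.snd heq
    have k1 := (key t1).1
    have k2 := (key t2).1
    have hfeq : f (mkC n t1 t1 1) = f (mkC n t2 t2 1) := ext' (by omega) hj hk
    have heq2 := hinj hfeq
    have := congrArg oI heq2
    rwa [oI_mk _ _ _ le_rfl hn1, oI_mk _ _ _ le_rfl hn1] at this
  -- Step 2: f of nonzero is nonzero
  have hne : ∀ x : ConvSgp n, x ≠ none → f x ≠ none := by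
    intro x hx h
    exact hx (hinj (h.trans f0.symm))
  -- Idempotents map to idempotents
  have hIdem : ∀ a m, 1 ≤ m → m ≤ n → oI (f (mkC n a a m)) = oJ (f (mkC n a a m)) := by
    intro a m hm hmn
    have hc : cmul (mkC n a a m) (mkC n a a m) = mkC n a a m :=
      cmul_mk hm hmn hm hmn (by omega) a a m (by omega) (by omega) (by omega)
    have hc' : cmul (f (mkC n a a m)) (f (mkC n a a m)) = f (mkC n a a m) := by
      rw [← hf, hc]
    exact idem_eq (hne _ (mk_ne a a m hm hmn)) hc'
  -- Containment transfer
  have hSub : ∀ a m b p, 1 ≤ m → 1 ≤ p → p ≤ n → b ≤ a → a + m ≤ b + p →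
      oI (f (mkC n b b p)) ≤ oI (f (mkC n a a m)) ∧
      oI (f (mkC n a a m)) + oK (f (mkC n a a m)) ≤
        oI (f (mkC n b b p)) + oK (f (mkC n b b p)) := by
    intro a m b p hm hp hpn hba hab
    have hmn : m ≤ n := by omega
    have hc : cmul (mkC n a a m) (mkC n b b p) = mkC n a a m :=
      cmul_mk hm hmn hp hpn (by omega) a a m (by omega) (by omega) (by omega)
    have hc' : cmul (f (mkC n a a m)) (f (mkC n b b p)) = f (mkC n a a m) := by
      rw [← hf, hc]
    have h1 : cmul (f (mkC n a a m)) (f (mkC n b b p)) ≠ none := by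
      rw [hc']; exact hne _ (mk_ne a a m hm hmn)
    obtain ⟨hku, hkv, hov⟩ := cmul_ne h1
    have e1 := oI_cmul hku hkv hov
    have e3 := oK_cmul hku hkv hov
    rw [hc'] at e1 e3
    have hu := hIdem a m hm hmn
    have hv := hIdem b p hp hpn
    omega
  -- strict monotonicity of cardinality
  have hStrict : ∀ a m b p, 1 ≤ m → 1 ≤ p → p ≤ n → b ≤ a → a + m ≤ b + p →
      (a ≠ b ∨ m ≠ p) → oK (f (mkC n a a m)) < oK (f (mkC n b b p)) := by
    intro a m b p hm hp hpn hba hab hd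
    obtain ⟨h1, h2⟩ := hSub a m b p hm hp hpn hba hab
    have hmn : m ≤ n := by omega
    by_contra hcon
    have hIu := hIdem a m hm hmn
    have hIv := hIdem b p hp hpn
    have heq : f (mkC n a a m) = f (mkC n b b p) := ext' (by omega) (by omega) (by omega)
    have heq2 := hinj heq
    have ha : a = b := by
      have := congrArg oI heq2
      rwa [oI_mk _ _ _ hm hmn, oI_mk _ _ _ hp hpn] at this
    have hm' : m = p := by
      have := congrArg oK heq2
      rwa [oK_mk _ _ _ hm hmn, oK_mk _ _ _ hp hpn] at this
    omega
  -- chain lemma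
  have hChainU : ∀ a m d, 1 ≤ m → m + d ≤ n →
      oK (f (mkC n a a m)) + d ≤ oK (f (mkC n a a (m + d))) := by
    intro a m d
    induction d with
    | zero => intro _ _; simp
    | succ d ih =>
      intro hm hmd
      have h1 := ih hm (by omega)
      have h2 := hStrict a (m + d) a (m + d + 1) (by omega) (by omega) (by omega)
        (by omega) (by omega) (by omega)
      have e : m + (d + 1) = m + d + 1 := rfl
      rw [e]
      omega
  have hChain : ∀ a m, 1 ≤ m → m ≤ n → oK (f (mkC n a a m)) = m := by
    intro a m hm hmn
    obtain ⟨m', rfl⟩ := Nat.exists_eq_add_of_le hm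
    have l1 : 1 ≤ oK (f (mkC n a a 1)) := oK_pos (hne _ (mk_ne a a 1 le_rfl hn1))
    have l2 := hChainU a 1 m' le_rfl (by omega)
    have u2 := hChainU a (1 + m') (n - (1 + m')) (by omega) (by omega)
    have hb := oK_le (f (mkC n a a (1 + m' + (n - (1 + m')))))
    omega
  -- the induced map on singletons
  have hGinj : ∀ a b, oI (f (mkC n a a 1)) = oI (f (mkC n b b 1)) → a = b := by
    intro a b h
    have ha := hIdem a 1 le_rfl hn1
    have hb := hIdem b 1 le_rfl hn1
    have hk : oK (f (mkC n a a 1)) = oK (f (mkC n b b 1)) := by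
      rw [hChain a 1 le_rfl hn1, hChain b 1 le_rfl hn1]
    have heq := hinj (ext' h (by omega) hk)
    have := congrArg oI heq
    rwa [oI_mk _ _ _ le_rfl hn1, oI_mk _ _ _ le_rfl hn1] at this
  have hAdj : ∀ a, oI (f (mkC n (a+1) (a+1) 1)) = oI (f (mkC n a a 1)) + 1 ∨
      oI (f (mkC n a a 1)) = oI (f (mkC n (a+1) (a+1) 1)) + 1 := by
    intro a
    have h1 := hSub a 1 a 2 le_rfl (by omega) hn le_rfl (by omega)
    have h2 := hSub (a+1) 1 a 2 le_rfl (by omega) hn (by omega) (by omega)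
    have hk1 := hChain a 1 le_rfl hn1
    have hk1' := hChain (a+1) 1 le_rfl hn1
    have hk2 := hChain a 2 (by omega) hn
    have hgg : oI (f (mkC n a a 1)) ≠ oI (f (mkC n (a+1) (a+1) 1)) := by
      intro h
      have := hGinj a (a+1) h
      omega
    omega
  have hMono : ∀ a, oI (f (mkC n (a+1) (a+1) 1)) = oI (f (mkC n a a 1)) + 1 := by
    intro a
    rcases hAdj a with h | hbad
    · exact h
    exfalso
    have Q : ∀ t, oI (f (mkC n (a+t) (a+t) 1)) + t = oI (f (mkC n a a 1)) ∧
        oI (f (mkC n (a+t+1) (a+t+1) 1)) + (t+1) = oI (f (mkC n a a 1)) := by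
      intro t
      induction t with
      | zero =>
        constructor
        · simp
        · have e : a + 0 + 1 = a + 1 := by omega
          rw [e]; omega
      | succ t ih =>
        obtain ⟨ih1, ih2⟩ := ih
        have e1 : a + (t+1) = a + t + 1 := rfl
        rw [e1]
        refine ⟨ih2, ?_⟩
        rcases hAdj (a+t+1) with h | h
        · exfalso
          have hh : oI (f (mkC n (a+t+1+1) (a+t+1+1) 1)) = oI (f (mkC n (a+t) (a+t) 1)) := by
            omega
          have := hGinj _ _ hh
          omega
        · omega
    obtain ⟨q1, _⟩ := Q (oI (f (mkC n a a 1)) + 1)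
    omega
  have hGG : ∀ a, oI (f (mkC n a a 1)) = a + oI (f (mkC n 0 0 1)) := by
    intro a
    induction a with
    | zero => simp
    | succ a ih =>
      have := hMono a
      omega
  set i0 := oI (f (mkC n 0 0 1)) with hi0
  -- images of idempotents
  have hIdemImg : ∀ a m, 1 ≤ m → m ≤ n → f (mkC n a a m) = mkC n (a + i0) (a + i0) m := by
    intro a m hm hmn
    have h1 := hSub a 1 a m le_rfl hm hmn le_rfl (by omega)
    have h2 := hSub (a+m-1) 1 a m le_rfl hm hmn (by omega) (by omega)
    have hk := hChain a m hm hmn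
    have hk1 := hChain a 1 le_rfl hn1
    have hk1' := hChain (a+m-1) 1 le_rfl hn1
    have g1 := hGG a
    have g2 := hGG (a+m-1)
    have hid := hIdem a m hm hmn
    apply ext'
    · rw [oI_mk _ _ _ hm hmn]; omega
    · rw [oJ_mk _ _ _ hm hmn]; omega
    · rw [oK_mk _ _ _ hm hmn]; omega
  refine ⟨i0, funext fun x => ?_⟩
  cases x with
  | none => rw [f0]; rfl
  | some x =>
    obtain ⟨i, j, k, hk1, hkn⟩ := x
    have hx : (some ⟨i, j, k, hk1, hkn⟩ : ConvSgp n) = mkC n i j k :=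
      (mkC_eq i j k hk1 hkn).symm
    rw [hx]
    have hu : f (mkC n i j k) ≠ none := hne _ (mk_ne i j k hk1 hkn)
    -- (a) domain containment from the left identity
    have ca : cmul (mkC n i i k) (mkC n i j k) = mkC n i j k :=
      cmul_mk hk1 hkn hk1 hkn (by omega) i j k (by omega) (by omega) (by omega)
    have ca' : cmul (mkC n (i + i0) (i + i0) k) (f (mkC n i j k)) = f (mkC n i j k) := by
      rw [← hIdemImg i k hk1 hkn, ← hf, ca]
    obtain ⟨ha1, ha2, hov1⟩ := cmul_ne (by rw [ca']; exact hu :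
      cmul (mkC n (i + i0) (i + i0) k) (f (mkC n i j k)) ≠ none)
    have ea1 := oI_cmul ha1 ha2 hov1
    have ea3 := oK_cmul ha1 ha2 hov1
    rw [ca'] at ea1 ea3
    simp only [oI_mk _ _ _ hk1 hkn, oJ_mk _ _ _ hk1 hkn, oK_mk _ _ _ hk1 hkn] at ea1 ea3
    -- (b) range containment from the right identity
    have cb : cmul (mkC n i j k) (mkC n j j k) = mkC n i j k :=
      cmul_mk hk1 hkn hk1 hkn (by omega) i j k (by omega) (by omega) (by omega)
    have cb' : cmul (f (mkC n i j k)) (mkC n (j + i0) (j + i0) k) = f (mkC n i j k) := by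
      rw [← hIdemImg j k hk1 hkn, ← hf, cb]
    obtain ⟨hb1, hb2, hov2⟩ := cmul_ne (by rw [cb']; exact hu :
      cmul (f (mkC n i j k)) (mkC n (j + i0) (j + i0) k) ≠ none)
    have eb2 := oJ_cmul hb1 hb2 hov2
    have eb3 := oK_cmul hb1 hb2 hov2
    rw [cb'] at eb2 eb3
    simp only [oI_mk _ _ _ hk1 hkn, oJ_mk _ _ _ hk1 hkn, oK_mk _ _ _ hk1 hkn] at eb2 eb3
    -- (c) left singleton at the start of the domain
    have cc : cmul (mkC n i i 1) (mkC n i j k) = mkC n i j 1 :=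
      cmul_mk le_rfl hn1 hk1 hkn (by omega) i j 1 (by omega) (by omega) (by omega)
    have cc' : cmul (mkC n (i + i0) (i + i0) 1) (f (mkC n i j k)) = f (mkC n i j 1) := by
      rw [← hIdemImg i 1 le_rfl hn1, ← hf, cc]
    obtain ⟨hc1, hc2, hov3⟩ := cmul_ne (by rw [cc']; exact hne _ (mk_ne i j 1 le_rfl hn1) :
      cmul (mkC n (i + i0) (i + i0) 1) (f (mkC n i j k)) ≠ none)
    simp only [oI_mk _ _ _ le_rfl hn1, oJ_mk _ _ _ le_rfl hn1, oK_mk _ _ _ le_rfl hn1] at hov3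
    -- (d) left singleton at the end of the domain
    have cd : cmul (mkC n (i+k-1) (i+k-1) 1) (mkC n i j k) = mkC n (i+k-1) (j+k-1) 1 :=
      cmul_mk le_rfl hn1 hk1 hkn (by omega) (i+k-1) (j+k-1) 1 (by omega) (by omega) (by omega)
    have cd' : cmul (mkC n (i+k-1+i0) (i+k-1+i0) 1) (f (mkC n i j k)) =
        f (mkC n (i+k-1) (j+k-1) 1) := by
      rw [← hIdemImg (i+k-1) 1 le_rfl hn1, ← hf, cd]
    obtain ⟨hd1, hd2, hov4⟩ := cmul_ne
      (by rw [cd']; exact hne _ (mk_ne (i+k-1) (j+k-1) 1 le_rfl hn1) :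
        cmul (mkC n (i+k-1+i0) (i+k-1+i0) 1) (f (mkC n i j k)) ≠ none)
    simp only [oI_mk _ _ _ le_rfl hn1, oJ_mk _ _ _ le_rfl hn1, oK_mk _ _ _ le_rfl hn1] at hov4
    -- conclude componentwise
    have hI : oI (f (mkC n i j k)) = i + i0 := by omega
    have hK : oK (f (mkC n i j k)) = k := by omega
    have hJ : oJ (f (mkC n i j k)) = j + i0 := by omega
    have hcs : cshift i0 (mkC n i j k) = mkC n (i + i0) (j + i0) k := by
      rw [mkC_eq i j k hk1 hkn, mkC_eq (i + i0) (j + i0) k hk1 hkn]; rfl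
    rw [hcs]
    exact ext' (by rw [oI_mk _ _ _ hk1 hkn]; exact hI)
      (by rw [oJ_mk _ _ _ hk1 hkn]; exact hJ)
      (by rw [oK_mk _ _ _ hk1 hkn]; exact hK)
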